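/- For every even k ≥ 4, the k-spectrum of the word a^{k/2} b^k a^{k/2} has cardinality exactly (k/2 + 1)². -/

import Mathlib

/-!
A length-`n` subsequence of `a^p b^n a^q` is `a^i b^j a^l` with `i ≤ p`, `l ≤ q` and
`j = n - i - l`; since `p + q ≤ n` the pair `(i, l)` ranges over the whole box
`[0, p] × [0, q]`. Different pairs give different words: if the `b`-block is nonempty it
separates the two `a`-blocks, and it is empty only for `(i, l) = (p, q)`. With `p = q = k / 2`
this gives `(k / 2 + 1)²` words.
-/

def wa : Bool := false
def wb : Bool := true

/-- The set of scattered factors (subsequences) of `w` of length exactly `k`. -/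
def ScatFact (k : ℕ) (w : List Bool) : Finset (List Bool) :=
  (w.sublists.filter (fun u => u.length = k)).toFinset

namespace List

variable {α : Type*}

theorem sublist_replicate_append_replicate_append_replicate_iff {u : List α} {x y z : α}
    {p n q : ℕ} :
    u <+ replicate p x ++ replicate n y ++ replicate q z ↔
      ∃ i ≤ p, ∃ j ≤ n, ∃ l ≤ q, u = replicate i x ++ replicate j y ++ replicate l z := by
  simp only [append_assoc, sublist_append_iff, sublist_replicate_iff]
  constructor
  · rintro ⟨_, _, rfl, ⟨i, hi, rfl⟩, _, _, rfl, ⟨j, hj, rfl⟩, ⟨l, hl, rfl⟩⟩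
    exact ⟨i, hi, j, hj, l, hl, rfl⟩
  · rintro ⟨i, hi, j, hj, l, hl, rfl⟩
    exact ⟨_, _, rfl, ⟨i, hi, rfl⟩, _, _, rfl, ⟨j, hj, rfl⟩, ⟨l, hl, rfl⟩⟩

theorem replicate_append_cons_inj {x y : α} (hxy : x ≠ y) {i i' : ℕ} {s t : List α}
    (h : replicate i x ++ y :: s = replicate i' x ++ y :: t) : i = i' ∧ s = t := by
  induction i generalizing i' with
  | zero =>
    cases i' with
    | zero => simpa using h
    | succ i' => exact absurd (cons.inj h).1.symm hxy
  | succ i ih =>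
    cases i' with
    | zero => exact absurd (cons.inj h).1 hxy
    | succ i' =>
      obtain ⟨rfl, rfl⟩ := ih (cons.inj h).2
      exact ⟨rfl, rfl⟩

theorem replicate_append_replicate_append_replicate_inj [DecidableEq α] {x y : α} (hxy : x ≠ y)
    {i j l i' j' l' : ℕ} (hj : 0 < j)
    (h : replicate i x ++ replicate j y ++ replicate l x =
      replicate i' x ++ replicate j' y ++ replicate l' x) :
    i = i' ∧ j = j' ∧ l = l' := by
  have hjj' : j = j' := by simpa [count_replicate, hxy] using congrArg (count y) h
  subst hjj'
  obtain ⟨j, rfl⟩ := Nat.exists_eq_succ_of_ne_zero hj.ne'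
  simp only [append_assoc, replicate_succ, cons_append] at h
  obtain ⟨rfl, hrest⟩ := replicate_append_cons_inj hxy h
  exact ⟨rfl, rfl, by simpa using hrest⟩

end List

open List

theorem mem_scatFact {k : ℕ} {w u : List Bool} : u ∈ ScatFact k w ↔ u <+ w ∧ u.length = k := by
  simp [ScatFact]

theorem scatFact_replicate_eq_image {p q n : ℕ} (h : p + q ≤ n) :
    ScatFact n (replicate p wa ++ replicate n wb ++ replicate q wa) =
      (Finset.Iic p ×ˢ Finset.Iic q).image
        fun il => replicate il.1 wa ++ replicate (n - il.1 - il.2) wb ++ replicate il.2 wa := by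
  ext u
  simp only [mem_scatFact, sublist_replicate_append_replicate_append_replicate_iff,
    Finset.mem_image, Finset.mem_product, Finset.mem_Iic, Prod.exists]
  constructor
  · rintro ⟨⟨i, hi, j, -, l, hl, rfl⟩, hlen⟩
    simp only [length_append, length_replicate] at hlen
    exact ⟨i, l, ⟨hi, hl⟩, by rw [← hlen]; congr 3; omega⟩
  · rintro ⟨i, l, ⟨hi, hl⟩, rfl⟩
    refine ⟨⟨i, hi, n - i - l, by omega, l, hl, rfl⟩, ?_⟩
    simp only [length_append, length_replicate]
    omega

theorem card_scatFact_replicate {p q n : ℕ} (h : p + q ≤ n) :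
    (ScatFact n (replicate p wa ++ replicate n wb ++ replicate q wa)).card = (p + 1) * (q + 1) := by
  rw [scatFact_replicate_eq_image h, Finset.card_image_of_injOn, Finset.card_product,
    Nat.card_Iic, Nat.card_Iic]
  rintro ⟨i, l⟩ hil ⟨i', l'⟩ hil' heq
  simp only [Finset.coe_product, Set.mem_prod, Finset.coe_Iic, Set.mem_Iic] at hil hil'
  have hab : wa ≠ wb := by decide
  rcases Nat.eq_zero_or_pos (n - i - l) with hj | hj
  · rcases Nat.eq_zero_or_pos (n - i' - l') with hj' | hj'
    · ext <;> dsimp only <;> omega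
    · have hjj' := (replicate_append_replicate_append_replicate_inj hab hj' heq.symm).2.1
      omega
  · obtain ⟨rfl, -, rfl⟩ := replicate_append_replicate_append_replicate_inj hab hj heq
    rfl

theorem scatfact_square_general (k : ℕ) :
    (ScatFact k (List.replicate (k / 2) wa ++ List.replicate k wb
        ++ List.replicate (k / 2) wa)).card = (k / 2 + 1) ^ 2 := by
  rw [card_scatFact_replicate (by omega), sq]

theorem scatfact_square (k : ℕ) (hk : 4 ≤ k) (heven : Even k) :
    (ScatFact k (List.replicate (k / 2) wa ++ List.replicate k wb
        ++ List.replicate (k / 2) wa)).card = (k / 2 + 1) ^ 2 :=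
  scatfact_square_general k
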